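/- Let S and A be nonempty finite sets with |S| = n, let P be an n×n real row-stochastic matrix (indexed by S), let γ ∈ ℝ with 0 ≤ γ < 1, and let r ∈ ℝ^S. For each s ∈ S let π(·|s) be a probability mass function on A, let ξ : S × A → ℝ be nonnegative, and let Δ : S → ℝ satisfy Δ(s) > 0 for all s ∈ S. Define Vπ := (I − γP)⁻¹·r, the error vector e(s) := −α·Δ(s) + ∑_{a∈A} π(a|s)·ξ(s,a), and V∞ := Vπ + (I − γP)⁻¹·e. If α ≥ (max_{s∈S, a∈A} ξ(s,a)) · (max_{s∈S} (Δ(s))⁻¹), then V∞(s) ≤ Vπ(s) for every s ∈ S. -/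

import Mathlib

/-!
The penalty dominates the estimation error: averaging `ξ` under `π(·|s)` gives at most
`max ξ ≤ α Δ(s)`, so the error vector `e` is nonpositive. Moreover `(I - γP)⁻¹` maps
nonpositive vectors to nonpositive vectors: if `(I - γP) x ≤ 0` then at a state `s₀` where `x`
is maximal, `x s₀ ≤ γ (P x) s₀ ≤ γ x s₀`, forcing `x s₀ ≤ 0`; applied to `±x` this also
shows that `I - γP` is injective, hence invertible. Hence `V∞ - Vπ = (I - γP)⁻¹ e ≤ 0`.
-/

open Finset Matrix

theorem sum_mul_le_of_forall_le {ι : Type*} {s : Finset ι} {w f : ι → ℝ} {c : ℝ}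
    (hw0 : ∀ i ∈ s, 0 ≤ w i) (hw1 : ∑ i ∈ s, w i = 1) (hf : ∀ i ∈ s, f i ≤ c) :
    ∑ i ∈ s, w i * f i ≤ c :=
  calc ∑ i ∈ s, w i * f i ≤ ∑ i ∈ s, w i * c :=
        sum_le_sum fun i hi => mul_le_mul_of_nonneg_left (hf i hi) (hw0 i hi)
    _ = c := by rw [← sum_mul, hw1, one_mul]

section RowStochastic

variable {S : Type*} [Fintype S] {P : Matrix S S ℝ} {γ : ℝ}

theorem mulVec_apply_le_of_rowStochastic (hP0 : ∀ s s', 0 ≤ P s s') (hP1 : ∀ s, ∑ s', P s s' = 1)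
    {x : S → ℝ} {c : ℝ} (hx : ∀ s, x s ≤ c) (s : S) : (P *ᵥ x) s ≤ c :=
  sum_mul_le_of_forall_le (fun s' _ => hP0 s s') (hP1 s) fun s' _ => hx s'

variable [DecidableEq S]

theorem nonpos_of_one_sub_smul_mulVec_nonpos (hP0 : ∀ s s', 0 ≤ P s s')
    (hP1 : ∀ s, ∑ s', P s s' = 1) (hγ0 : 0 ≤ γ) (hγ1 : γ < 1) {x : S → ℝ}
    (hx : (1 - γ • P) *ᵥ x ≤ 0) : x ≤ 0 := by
  intro s
  have : Nonempty S := ⟨s⟩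
  obtain ⟨s₀, hs₀⟩ := Finite.exists_max x
  have hPx : (P *ᵥ x) s₀ ≤ x s₀ := mulVec_apply_le_of_rowStochastic hP0 hP1 hs₀ s₀
  have hx₀ : x s₀ ≤ γ * (P *ᵥ x) s₀ := by
    have := hx s₀
    simp only [sub_mulVec, one_mulVec, smul_mulVec, Pi.sub_apply, Pi.smul_apply,
      smul_eq_mul, Pi.zero_apply] at this
    linarith
  have : x s₀ ≤ 0 := by nlinarith [mul_le_mul_of_nonneg_left hPx hγ0]
  exact (hs₀ s).trans this

theorem isUnit_one_sub_smul (hP0 : ∀ s s', 0 ≤ P s s') (hP1 : ∀ s, ∑ s', P s s' = 1)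
    (hγ0 : 0 ≤ γ) (hγ1 : γ < 1) : IsUnit (1 - γ • P) := by
  rw [← mulVec_injective_iff_isUnit]
  intro x y hxy
  have hxy' : (1 - γ • P) *ᵥ (x - y) ≤ 0 := by rw [mulVec_sub, hxy, sub_self]
  have hyx' : (1 - γ • P) *ᵥ (y - x) ≤ 0 := by rw [mulVec_sub, hxy, sub_self]
  exact le_antisymm (sub_nonpos.1 (nonpos_of_one_sub_smul_mulVec_nonpos hP0 hP1 hγ0 hγ1 hxy'))
    (sub_nonpos.1 (nonpos_of_one_sub_smul_mulVec_nonpos hP0 hP1 hγ0 hγ1 hyx'))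

theorem inv_one_sub_smul_mulVec_nonpos (hP0 : ∀ s s', 0 ≤ P s s')
    (hP1 : ∀ s, ∑ s', P s s' = 1) (hγ0 : 0 ≤ γ) (hγ1 : γ < 1) {e : S → ℝ} (he : e ≤ 0) :
    (1 - γ • P)⁻¹ *ᵥ e ≤ 0 := by
  apply nonpos_of_one_sub_smul_mulVec_nonpos hP0 hP1 hγ0 hγ1
  rwa [mulVec_mulVec, mul_nonsing_inv _ ((isUnit_one_sub_smul hP0 hP1 hγ0 hγ1).map detMonoidHom),
    one_mulVec]

end RowStochastic

theorem epq_underestimation_general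
    {S A : Type*} [Fintype S] [Nonempty S] [DecidableEq S] [Fintype A] [Nonempty A]
    (P : Matrix S S ℝ)
    (hP0 : ∀ s s', 0 ≤ P s s') (hP1 : ∀ s, ∑ s', P s s' = 1)
    (γ : ℝ) (hγ0 : 0 ≤ γ) (hγ1 : γ < 1)
    (π : S → A → ℝ)
    (hπ0 : ∀ s a, 0 ≤ π s a) (hπ1 : ∀ s, ∑ a, π s a = 1)
    (ξ : S → A → ℝ) (hξ : ∀ s a, 0 ≤ ξ s a)
    (Δ : S → ℝ) (hΔ : ∀ s, 0 < Δ s)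
    (α : ℝ)
    (hα : (Finset.univ.sup' Finset.univ_nonempty fun p : S × A => ξ p.1 p.2) *
        (Finset.univ.sup' Finset.univ_nonempty fun s : S => (Δ s)⁻¹) ≤ α)
    (Vπ : S → ℝ)
    (e : S → ℝ) (he : ∀ s, e s = -α * Δ s + ∑ a, π s a * ξ s a)
    (Vinf : S → ℝ) (hVinf : Vinf = Vπ + (1 - γ • P)⁻¹.mulVec e) :
    ∀ s, Vinf s ≤ Vπ s := by
  set M := univ.sup' univ_nonempty fun p : S × A => ξ p.1 p.2
  have hM : 0 ≤ M := by
    obtain ⟨s, a⟩ := Classical.arbitrary (S × A)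
    exact (hξ s a).trans (le_sup' (fun p : S × A => ξ p.1 p.2) (mem_univ (s, a)))
  have he0 : e ≤ 0 := fun s => by
    have herr : ∑ a, π s a * ξ s a ≤ M := sum_mul_le_of_forall_le (fun a _ => hπ0 s a) (hπ1 s)
      fun a _ => le_sup' (fun p : S × A => ξ p.1 p.2) (mem_univ (s, a))
    have hpen : M ≤ α * Δ s := calc
      M = M * (Δ s)⁻¹ * Δ s := by field_simp [(hΔ s).ne']
      _ ≤ α * Δ s := mul_le_mul_of_nonneg_right
        ((mul_le_mul_of_nonneg_left (le_sup' (fun t => (Δ t)⁻¹) (mem_univ s)) hM).trans hα)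
        (hΔ s).le
    show e s ≤ 0
    rw [he]
    linarith
  intro s
  rw [hVinf, Pi.add_apply]
  exact add_le_of_nonpos_right (inv_one_sub_smul_mulVec_nonpos hP0 hP1 hγ0 hγ1 he0 s)

theorem epq_underestimation
    {S A : Type*} [Fintype S] [Nonempty S] [DecidableEq S] [Fintype A] [Nonempty A]
    (P : Matrix S S ℝ)
    (hP0 : ∀ s s', 0 ≤ P s s') (hP1 : ∀ s, ∑ s', P s s' = 1)
    (γ : ℝ) (hγ0 : 0 ≤ γ) (hγ1 : γ < 1)
    (r : S → ℝ)
    (π : S → A → ℝ)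
    (hπ0 : ∀ s a, 0 ≤ π s a) (hπ1 : ∀ s, ∑ a, π s a = 1)
    (ξ : S → A → ℝ) (hξ : ∀ s a, 0 ≤ ξ s a)
    (Δ : S → ℝ) (hΔ : ∀ s, 0 < Δ s)
    (α : ℝ)
    (hα : (Finset.univ.sup' Finset.univ_nonempty fun p : S × A => ξ p.1 p.2) *
        (Finset.univ.sup' Finset.univ_nonempty fun s : S => (Δ s)⁻¹) ≤ α)
    (Vπ : S → ℝ) (hVπ : Vπ = (1 - γ • P)⁻¹.mulVec r)
    (e : S → ℝ) (he : ∀ s, e s = -α * Δ s + ∑ a, π s a * ξ s a)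
    (Vinf : S → ℝ) (hVinf : Vinf = Vπ + (1 - γ • P)⁻¹.mulVec e) :
    ∀ s, Vinf s ≤ Vπ s :=
  epq_underestimation_general P hP0 hP1 γ hγ0 hγ1 π hπ0 hπ1 ξ hξ Δ hΔ α hα Vπ e he Vinf hVinf
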